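/- arXiv:math/0005003 — 2 statements merged into one kernel-verified Lean document; each statement's English description precedes it below -/
import Mathlib

section
/- For every real number x ≥ 0, the Gaussian tail integral satisfies 1/(x + √(x² + 2)) ≤ e^{x²} ∫_x^∞ e^{-t²} dt ≤ 1/(x + √(x² + 4/π)). -/
/-! Compare `Φ(x) = ∫_x^∞ e^{-t²} dt` with `e^{-x²} / (x + √(x² + c))`. Both tend to `0` at
infinity, and the derivative of their difference has the sign of `x √(x² + c) - (x² + c - 1)`,
which for `x ≥ 0` and `c ≥ 1` is the sign of `(2 - c) x² - (c - 1)²`. For `c = 2` the difference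
therefore decreases on `[0, ∞)` towards `0`, so it is nonnegative. For `1 ≤ c < 2` it first
decreases and then increases towards `0`, so it is nonpositive on `[0, ∞)` once it is at `0`;
for `c = 4 / π` its value at `0` is `√π / 2 - √π / 2 = 0`. -/

open MeasureTheory Real Set Filter Topology

section TailIntegral

variable {E : Type*} [NormedAddCommGroup E] [NormedSpace ℝ E] {f : ℝ → E}

theorem hasDerivAt_integral_Ici [CompleteSpace E] (hf : Integrable f) (hcont : Continuous f)
    (x : ℝ) :
    HasDerivAt (fun a => ∫ t in Ici a, f t) (-f x) x := by
  have hsplit : (fun a => ∫ t in Ici a, f t) =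
      fun a => (∫ t in Ioi 0, f t) - ∫ t in 0..a, f t := by
    ext a
    rw [integral_Ici_eq_integral_Ioi,
      ← intervalIntegral.integral_Ioi_sub_Ioi' hf.integrableOn hf.integrableOn, sub_sub_cancel]
  rw [hsplit]
  exact (intervalIntegral.integral_hasDerivAt_right hf.intervalIntegrable
    (hcont.stronglyMeasurableAtFilter _ _) hcont.continuousAt).const_sub _

theorem tendsto_integral_Ici_atTop (hf : Integrable f) :
    Tendsto (fun a => ∫ t in Ici a, f t) atTop (𝓝 0) := by
  have h := tendsto_setIntegral_of_antitone (μ := volume) (f := f)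
    (fun a : ℝ => measurableSet_Ici) (fun _ _ hab => Ici_subset_Ici.2 hab) ⟨0, hf.integrableOn⟩
  have hempty : (⋂ a : ℝ, Ici a) = ∅ := by
    ext t; simpa using ⟨t + 1, by linarith⟩
  simpa [hempty] using h

end TailIntegral

theorem le_of_antitoneOn_Ici_of_tendsto {f : ℝ → ℝ} {a l x : ℝ} (hf : AntitoneOn f (Ici a))
    (hl : Tendsto f atTop (𝓝 l)) (hx : a ≤ x) : l ≤ f x :=
  le_of_tendsto hl <| (eventually_ge_atTop x).mono fun _ hy => hf hx (hx.trans hy) hy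

theorem le_of_monotoneOn_Ici_of_tendsto {f : ℝ → ℝ} {a l x : ℝ} (hf : MonotoneOn f (Ici a))
    (hl : Tendsto f atTop (𝓝 l)) (hx : a ≤ x) : f x ≤ l :=
  ge_of_tendsto hl <| (eventually_ge_atTop x).mono fun _ hy => hf hx (hx.trans hy) hy

theorem mul_sqrt_sq_add_le_iff {c x : ℝ} (hc : 1 ≤ c) (hx : 0 ≤ x) :
    x * √(x ^ 2 + c) ≤ x ^ 2 + c - 1 ↔ (2 - c) * x ^ 2 ≤ (c - 1) ^ 2 := by
  have hsq : (x * √(x ^ 2 + c)) ^ 2 = x ^ 2 * (x ^ 2 + c) := by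
    rw [mul_pow, sq_sqrt (by positivity)]
  have hdiff : (x ^ 2 + c - 1) ^ 2 - x ^ 2 * (x ^ 2 + c) = (c - 1) ^ 2 - (2 - c) * x ^ 2 := by ring
  rw [← pow_le_pow_iff_left₀ (by positivity) (by nlinarith) two_ne_zero, hsq]
  constructor <;> intro h <;> linarith

theorem add_sqrt_sq_add_pos {c : ℝ} (hc : 0 < c) (x : ℝ) : 0 < x + √(x ^ 2 + c) := by
  have : |x| < √(x ^ 2 + c) := by
    rw [← sqrt_sq_eq_abs]
    exact sqrt_lt_sqrt (sq_nonneg x) (by linarith)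
  linarith [neg_abs_le x]

noncomputable def gaussianTail (x : ℝ) : ℝ := ∫ t in Ici x, exp (-t ^ 2)

theorem integrable_exp_neg_sq : Integrable fun t : ℝ => exp (-t ^ 2) := by
  simpa using integrable_exp_neg_mul_sq one_pos

theorem hasDerivAt_gaussianTail (x : ℝ) : HasDerivAt gaussianTail (-exp (-x ^ 2)) x :=
  hasDerivAt_integral_Ici integrable_exp_neg_sq (by fun_prop) x

theorem gaussianTail_zero : gaussianTail 0 = √π / 2 := by
  simpa [gaussianTail, integral_Ici_eq_integral_Ioi] using integral_gaussian_Ioi 1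

noncomputable def tailError (c x : ℝ) : ℝ := gaussianTail x - exp (-x ^ 2) / (x + √(x ^ 2 + c))

theorem exp_sq_mul_tailError (c x : ℝ) :
    exp (x ^ 2) * tailError c x = exp (x ^ 2) * gaussianTail x - 1 / (x + √(x ^ 2 + c)) := by
  rw [tailError, mul_sub, mul_div_assoc', ← exp_add, add_neg_cancel, exp_zero]

theorem hasDerivAt_tailError {c : ℝ} (hc : 0 < c) (x : ℝ) :
    HasDerivAt (tailError c)
      (exp (-x ^ 2) * (x * √(x ^ 2 + c) - (x ^ 2 + c - 1)) /
        (√(x ^ 2 + c) * (x + √(x ^ 2 + c)))) x := by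
  have hs : 0 < √(x ^ 2 + c) := sqrt_pos.2 (by positivity)
  have hs2 : √(x ^ 2 + c) ^ 2 = x ^ 2 + c := sq_sqrt (by positivity)
  have hd := add_sqrt_sq_add_pos hc x
  have hexp : HasDerivAt (fun y => exp (-y ^ 2)) (-(exp (-x ^ 2) * (2 * x))) x := by
    simpa using ((hasDerivAt_pow 2 x).neg).exp
  have hsqrt : HasDerivAt (fun y => √(y ^ 2 + c)) (x / √(x ^ 2 + c)) x := by
    convert ((hasDerivAt_pow 2 x).add_const c).sqrt (by positivity) using 1
    push_cast
    field_simp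
  have hden : HasDerivAt (fun y => y + √(y ^ 2 + c)) (1 + x / √(x ^ 2 + c)) x :=
    (hasDerivAt_id' x).add hsqrt
  refine ((hasDerivAt_gaussianTail x).sub (hexp.div hden hd.ne')).congr_deriv ?_
  field_simp
  linear_combination (-√(x ^ 2 + c) - x) * hs2

theorem tendsto_tailError (c : ℝ) : Tendsto (tailError c) atTop (𝓝 0) := by
  have hexp : Tendsto (fun x : ℝ => exp (-x ^ 2)) atTop (𝓝 0) :=
    tendsto_exp_atBot.comp (tendsto_neg_atTop_atBot.comp (tendsto_pow_atTop two_ne_zero))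
  have hden : Tendsto (fun x : ℝ => x + √(x ^ 2 + c)) atTop atTop :=
    tendsto_atTop_mono (fun x => le_add_of_nonneg_right (sqrt_nonneg _)) tendsto_id
  rw [← sub_zero 0]
  exact (tendsto_integral_Ici_atTop integrable_exp_neg_sq).sub (hexp.div_atTop hden)

section Monotonicity

variable {c : ℝ} {s : Set ℝ}

theorem antitoneOn_tailError (hc : 0 < c) (hs : Convex ℝ s)
    (h : ∀ x ∈ interior s, x * √(x ^ 2 + c) ≤ x ^ 2 + c - 1) : AntitoneOn (tailError c) s :=
  antitoneOn_of_hasDerivWithinAt_nonpos hs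
    (fun x _ => (hasDerivAt_tailError hc x).continuousAt.continuousWithinAt)
    (fun x _ => (hasDerivAt_tailError hc x).hasDerivWithinAt) fun x hx =>
    div_nonpos_of_nonpos_of_nonneg
      (mul_nonpos_of_nonneg_of_nonpos (exp_pos _).le (sub_nonpos.2 (h x hx)))
      (mul_nonneg (sqrt_nonneg _) (add_sqrt_sq_add_pos hc x).le)

theorem monotoneOn_tailError (hc : 0 < c) (hs : Convex ℝ s)
    (h : ∀ x ∈ interior s, x ^ 2 + c - 1 ≤ x * √(x ^ 2 + c)) : MonotoneOn (tailError c) s :=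
  monotoneOn_of_hasDerivWithinAt_nonneg hs
    (fun x _ => (hasDerivAt_tailError hc x).continuousAt.continuousWithinAt)
    (fun x _ => (hasDerivAt_tailError hc x).hasDerivWithinAt) fun x hx =>
    div_nonneg (mul_nonneg (exp_pos _).le (sub_nonneg.2 (h x hx)))
      (mul_nonneg (sqrt_nonneg _) (add_sqrt_sq_add_pos hc x).le)

end Monotonicity

theorem tailError_nonneg {c x : ℝ} (hc : 2 ≤ c) (hx : 0 ≤ x) : 0 ≤ tailError c x := by
  have hanti : AntitoneOn (tailError c) (Ici 0) := by
    refine antitoneOn_tailError (by linarith) (convex_Ici 0) fun y hy => ?_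
    rw [interior_Ici] at hy
    rw [mul_sqrt_sq_add_le_iff (by linarith) hy.le]
    nlinarith [sq_nonneg y, sq_nonneg (c - 1)]
  exact le_of_antitoneOn_Ici_of_tendsto hanti (tendsto_tailError c) hx

theorem tailError_nonpos {c x : ℝ} (hc₁ : 1 ≤ c) (hc₂ : c < 2) (h₀ : tailError c 0 ≤ 0)
    (hx : 0 ≤ x) : tailError c x ≤ 0 := by
  set x₀ := (c - 1) / √(2 - c)
  have hx₀ : 0 ≤ x₀ := div_nonneg (by linarith) (sqrt_nonneg _)
  have hx₀_sq : (2 - c) * x₀ ^ 2 = (c - 1) ^ 2 := by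
    rw [div_pow, sq_sqrt (by linarith)]
    field_simp [(by linarith : (2 : ℝ) - c ≠ 0)]
  rcases le_total x x₀ with hle | hge
  · have hanti : AntitoneOn (tailError c) (Icc 0 x₀) := by
      refine antitoneOn_tailError (by linarith) (convex_Icc 0 x₀) fun y hy => ?_
      rw [interior_Icc] at hy
      rw [mul_sqrt_sq_add_le_iff hc₁ hy.1.le, ← hx₀_sq]
      exact mul_le_mul_of_nonneg_left (pow_le_pow_left₀ hy.1.le hy.2.le 2) (by linarith)
    exact (hanti ⟨le_rfl, hx₀⟩ ⟨hx, hle⟩ hx).trans h₀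
  · have hmono : MonotoneOn (tailError c) (Ici x₀) := by
      refine monotoneOn_tailError (by linarith) (convex_Ici x₀) fun y hy => ?_
      rw [interior_Ici] at hy
      refine (lt_iff_lt_of_le_iff_le (mul_sqrt_sq_add_le_iff hc₁ (hx₀.trans hy.le))).2 ?_ |>.le
      rw [← hx₀_sq]
      exact mul_lt_mul_of_pos_left (pow_lt_pow_left₀ hy hx₀ two_ne_zero) (by linarith)
    exact le_of_monotoneOn_Ici_of_tendsto hmono (tendsto_tailError c) hge

theorem tailError_four_div_pi_zero : tailError (4 / π) 0 = 0 := by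
  rw [tailError, gaussianTail_zero, zero_pow two_ne_zero, neg_zero, exp_zero, zero_add,
    zero_add, sqrt_div' _ pi_pos.le,
    show (4 : ℝ) = 2 ^ 2 by norm_num, sqrt_sq zero_le_two]
  field_simp
  ring

/-- For every real `x ≥ 0`, the Gaussian tail integral satisfies
`1/(x + √(x² + 2)) ≤ e^{x²} ∫_x^∞ e^{-t²} dt ≤ 1/(x + √(x² + 4/π))`. -/
theorem gaussian_tail_bounds (x : ℝ) (hx : 0 ≤ x) :
    1 / (x + Real.sqrt (x ^ 2 + 2)) ≤
      Real.exp (x ^ 2) * (∫ t in Set.Ici x, Real.exp (-t ^ 2)) ∧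
    Real.exp (x ^ 2) * (∫ t in Set.Ici x, Real.exp (-t ^ 2)) ≤
      1 / (x + Real.sqrt (x ^ 2 + 4 / Real.pi)) := by
  change _ ≤ exp (x ^ 2) * gaussianTail x ∧ exp (x ^ 2) * gaussianTail x ≤ _
  have hπ₁ : 1 ≤ 4 / π := by rw [le_div_iff₀ pi_pos]; linarith [pi_le_four]
  have hπ₂ : 4 / π < 2 := by rw [div_lt_iff₀ pi_pos]; linarith [pi_gt_three]
  have hlower := mul_nonneg (exp_pos (x ^ 2)).le (tailError_nonneg le_rfl hx)
  have hupper := mul_nonpos_of_nonneg_of_nonpos (exp_pos (x ^ 2)).le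
    (tailError_nonpos hπ₁ hπ₂ tailError_four_div_pi_zero.le hx)
  rw [exp_sq_mul_tailError] at hlower hupper
  constructor <;> linarith
end

section
/- Let Δ > 0, B ∈ (0, π/Δ), σ > 0, and define ε(ω) = 1 − (1/√π) ∫_{σ(ω−π/Δ)/√2}^{σ(ω+π/Δ)/√2} e^{−t²} dt. Then for every ω ∈ [−B, B], 0 ≤ ε(ω) ≤ 1/(σ(π/Δ − B) · exp(σ²(π/Δ − B)²/2)). -/
open MeasureTheory

lemma gauss_integrable : Integrable (fun t : ℝ => Real.exp (-t ^ 2)) := by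
  simpa using integrable_exp_neg_mul_sq (b := 1) one_pos

lemma gauss_total : ∫ t : ℝ, Real.exp (-t ^ 2) = Real.sqrt Real.pi := by
  simpa using integral_gaussian 1

lemma gauss_tail_eq (c : ℝ) :
    ∫ t in Set.Ioi c, t * Real.exp (-t ^ 2) = Real.exp (-c ^ 2) / 2 := by
  have h := MeasureTheory.integral_Ioi_of_hasDerivAt_of_tendsto'
    (f := fun t : ℝ => -Real.exp (-t ^ 2) / 2)
    (f' := fun t : ℝ => t * Real.exp (-t ^ 2)) (a := c)
    (fun x hx => by
      have h1 : HasDerivAt (fun t : ℝ => -t ^ 2) (-(2 * x)) x := by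
        simpa [Pi.neg_def] using ((hasDerivAt_pow 2 x).neg)
      have : HasDerivAt (fun t : ℝ => -Real.exp (-t ^ 2) / 2)
          (-(Real.exp (-x ^ 2) * (-(2 * x))) / 2) x := ((h1.exp).neg).div_const 2
      exact this.congr_deriv (by ring))
    (by simpa using (integrable_mul_exp_neg_mul_sq (b := 1) one_pos).integrableOn)
    (by
      have : Filter.Tendsto (fun t : ℝ => Real.exp (-t ^ 2)) Filter.atTop (nhds 0) := by
        apply Real.tendsto_exp_atBot.comp
        apply Filter.tendsto_neg_atBot_iff.mpr
        exact Filter.tendsto_pow_atTop (by norm_num)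
      simpa using ((this.neg).div_const 2))
  rw [h]; ring

lemma gauss_tail_le {c : ℝ} (hc : 0 < c) :
    ∫ t in Set.Ioi c, Real.exp (-t ^ 2) ≤ Real.exp (-c ^ 2) / (2 * c) := by
  have hmono : ∫ t in Set.Ioi c, Real.exp (-t ^ 2)
      ≤ ∫ t in Set.Ioi c, (t / c) * Real.exp (-t ^ 2) := by
    apply setIntegral_mono_on
    · exact gauss_integrable.integrableOn
    · have hi : Integrable fun t : ℝ => t * Real.exp (-t ^ 2) := by
        simpa using integrable_mul_exp_neg_mul_sq (b := 1) one_pos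
      have : IntegrableOn (fun t : ℝ => (1 / c) * (t * Real.exp (-t ^ 2))) (Set.Ioi c) :=
        (hi.integrableOn).smul (1 / c)
      apply this.congr_fun _ measurableSet_Ioi
      intro x _; ring
    · exact measurableSet_Ioi
    · intro x hx
      have h1 : (1 : ℝ) ≤ x / c := (one_le_div hc).mpr (le_of_lt hx)
      nlinarith [Real.exp_pos (-x ^ 2)]
  have heq : ∫ t in Set.Ioi c, (t / c) * Real.exp (-t ^ 2)
      = (1 / c) * ∫ t in Set.Ioi c, t * Real.exp (-t ^ 2) := by
    rw [← MeasureTheory.integral_const_mul]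
    apply setIntegral_congr_fun measurableSet_Ioi
    intro x _; simp; ring
  rw [heq, gauss_tail_eq] at hmono
  calc ∫ t in Set.Ioi c, Real.exp (-t ^ 2) ≤ 1 / c * (Real.exp (-c ^ 2) / 2) := hmono
    _ = Real.exp (-c ^ 2) / (2 * c) := by field_simp

/-- For `ε(ω) = 1 − (1/√π) ∫_{σ(ω−π/Δ)/√2}^{σ(ω+π/Δ)/√2} e^{−t²} dt` and `ω ∈ [−B, B]`,
`0 ≤ ε(ω) ≤ 1/(σ(π/Δ − B)·exp(σ²(π/Δ − B)²/2))`. -/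
theorem epsilon_bound (Δ B σ : ℝ) (hΔ : 0 < Δ) (hB : 0 < B) (hBΔ : B < Real.pi / Δ)
    (hσ : 0 < σ) (ω : ℝ) (hω : ω ∈ Set.Icc (-B) B) :
    0 ≤ 1 - (1 / Real.sqrt Real.pi) *
        (∫ t in (σ * (ω - Real.pi / Δ) / Real.sqrt 2)..(σ * (ω + Real.pi / Δ) / Real.sqrt 2),
          Real.exp (-t ^ 2)) ∧
    1 - (1 / Real.sqrt Real.pi) *
        (∫ t in (σ * (ω - Real.pi / Δ) / Real.sqrt 2)..(σ * (ω + Real.pi / Δ) / Real.sqrt 2),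
          Real.exp (-t ^ 2)) ≤
      1 / (σ * (Real.pi / Δ - B) * Real.exp (σ ^ 2 * (Real.pi / Δ - B) ^ 2 / 2)) := by
  have hπ : 0 < Real.sqrt Real.pi := Real.sqrt_pos.mpr Real.pi_pos
  have hs2 : (0 : ℝ) < Real.sqrt 2 := by positivity
  set a := σ * (ω - Real.pi / Δ) / Real.sqrt 2 with ha
  set b := σ * (ω + Real.pi / Δ) / Real.sqrt 2 with hb
  set c := σ * (Real.pi / Δ - B) / Real.sqrt 2 with hc
  have hd : 0 < Real.pi / Δ - B := by linarith
  have hcpos : 0 < c := by positivity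
  have hω1 : -B ≤ ω := hω.1
  have hω2 : ω ≤ B := hω.2
  have hcb : c ≤ b := by
    rw [hc, hb]
    gcongr
    nlinarith
  have hac : a ≤ -c := by
    have hnum : σ * (ω - Real.pi / Δ) ≤ -(σ * (Real.pi / Δ - B)) := by nlinarith
    rw [hc, ha, ← neg_div]
    exact div_le_div_of_nonneg_right hnum hs2.le
  have hab : a ≤ b := by linarith
  set I := ∫ t in a..b, Real.exp (-t ^ 2) with hI
  have hIeq : I = (∫ t in Set.Iic b, Real.exp (-t ^ 2)) - ∫ t in Set.Iic a, Real.exp (-t ^ 2) :=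
    (intervalIntegral.integral_Iic_sub_Iic gauss_integrable.integrableOn
      gauss_integrable.integrableOn).symm
  have htot : (∫ t in Set.Iic b, Real.exp (-t ^ 2)) + (∫ t in Set.Ioi b, Real.exp (-t ^ 2))
      = Real.sqrt Real.pi := by
    rw [intervalIntegral.integral_Iic_add_Ioi gauss_integrable.integrableOn
      gauss_integrable.integrableOn, gauss_total]
  have hdiff : Real.sqrt Real.pi - I
      = (∫ t in Set.Iic a, Real.exp (-t ^ 2)) + ∫ t in Set.Ioi b, Real.exp (-t ^ 2) := by
    rw [hIeq]; linarith
  have hIic : ∫ t in Set.Iic a, Real.exp (-t ^ 2) = ∫ t in Set.Ioi (-a), Real.exp (-t ^ 2) := by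
    rw [← integral_comp_neg_Iic a (fun t => Real.exp (-t ^ 2))]
    simp
  have hmono : ∀ u v : ℝ, u ≤ v → ∫ t in Set.Ioi v, Real.exp (-t ^ 2)
      ≤ ∫ t in Set.Ioi u, Real.exp (-t ^ 2) := by
    intro u v huv
    apply setIntegral_mono_set gauss_integrable.integrableOn
    · filter_upwards with x using (Real.exp_pos _).le
    · exact HasSubset.Subset.eventuallyLE (Set.Ioi_subset_Ioi huv)
  have h1 : ∫ t in Set.Iic a, Real.exp (-t ^ 2) ≤ Real.exp (-c ^ 2) / (2 * c) := by
    rw [hIic]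
    exact le_trans (hmono c (-a) (by linarith)) (gauss_tail_le hcpos)
  have h2 : ∫ t in Set.Ioi b, Real.exp (-t ^ 2) ≤ Real.exp (-c ^ 2) / (2 * c) :=
    le_trans (hmono c b hcb) (gauss_tail_le hcpos)
  have hnonneg : ∀ s : Set ℝ, 0 ≤ ∫ t in s, Real.exp (-t ^ 2) := fun s =>
    setIntegral_nonneg_of_ae_restrict (by filter_upwards with x using (Real.exp_pos _).le)
  constructor
  · have hIle : I ≤ Real.sqrt Real.pi := by
      have := hnonneg (Set.Iic a)
      have := hnonneg (Set.Ioi b)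
      linarith
    rw [sub_nonneg, one_div, inv_mul_le_iff₀ hπ]
    simpa using hIle
  · have hkey : Real.sqrt Real.pi - I ≤ Real.exp (-c ^ 2) / c := by
      rw [hdiff]
      calc _ ≤ Real.exp (-c ^ 2) / (2 * c) + Real.exp (-c ^ 2) / (2 * c) := by linarith
        _ = Real.exp (-c ^ 2) / c := by field_simp; ring
    have hc2 : c ^ 2 = σ ^ 2 * (Real.pi / Δ - B) ^ 2 / 2 := by
      rw [hc, div_pow, Real.sq_sqrt (by norm_num : (0:ℝ) ≤ 2)]
      ring
    have hexp : Real.exp (-c ^ 2) = 1 / Real.exp (σ ^ 2 * (Real.pi / Δ - B) ^ 2 / 2) := by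
      rw [← hc2, Real.exp_neg]; simp [one_div]
    have hfinal : 1 - (1 / Real.sqrt Real.pi) * I
        ≤ Real.exp (-c ^ 2) / (c * Real.sqrt Real.pi) := by
      have heq1 : 1 - (1 / Real.sqrt Real.pi) * I
          = (Real.sqrt Real.pi - I) / Real.sqrt Real.pi := by
        field_simp
      rw [heq1, div_le_div_iff₀ hπ (by positivity)]
      calc (Real.sqrt Real.pi - I) * (c * Real.sqrt Real.pi)
          = ((Real.sqrt Real.pi - I) * c) * Real.sqrt Real.pi := by ring
        _ ≤ Real.exp (-c ^ 2) * Real.sqrt Real.pi := by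
            apply mul_le_mul_of_nonneg_right _ hπ.le
            calc (Real.sqrt Real.pi - I) * c ≤ (Real.exp (-c ^ 2) / c) * c :=
                mul_le_mul_of_nonneg_right hkey hcpos.le
              _ = Real.exp (-c ^ 2) := by field_simp
    refine le_trans hfinal ?_
    rw [hexp]
    have hsqrt2pi : Real.sqrt 2 ≤ Real.sqrt Real.pi :=
      Real.sqrt_le_sqrt (by linarith [Real.pi_gt_three])
    have hcs : σ * (Real.pi / Δ - B) ≤ c * Real.sqrt Real.pi := by
      rw [hc, div_mul_eq_mul_div, le_div_iff₀ hs2]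
      calc σ * (Real.pi / Δ - B) * Real.sqrt 2
          ≤ σ * (Real.pi / Δ - B) * Real.sqrt Real.pi := by
            apply mul_le_mul_of_nonneg_left hsqrt2pi (by positivity)
        _ = σ * (Real.pi / Δ - B) * Real.sqrt Real.pi := rfl
    set E := Real.exp (σ ^ 2 * (Real.pi / Δ - B) ^ 2 / 2) with hE'
    have hE : 0 < E := Real.exp_pos _
    rw [div_div]
    apply one_div_le_one_div_of_le (by positivity)
    calc σ * (Real.pi / Δ - B) * E ≤ (c * Real.sqrt Real.pi) * E :=
        mul_le_mul_of_nonneg_right hcs hE.le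
      _ = E * (c * Real.sqrt Real.pi) := by ring
end
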